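/- arXiv:1606.06613 — 2 statements merged into one kernel-verified Lean document; each statement's English description precedes it below -/
import Mathlib

section
/- For any finitely supported multi-index ν, ∑_{m ≤ ν} C(ν, m) · ((|m| + 2)! / 2) · ((|ν − m| + 2)! / 2) = (|ν| + 5)! / 120. -/
/-!
Writing `C(ν, m)` for the multi-index binomial coefficient, comparing coefficients in
`∏ⱼ (1 + X) ^ νⱼ = (1 + X) ^ |ν|` shows that `∑_{m ≤ ν, |m| = k} C(ν, m) = C(|ν|, k)`. Since the
summand depends on `m` only through `|m|`, the sum collapses to the one-variable sum
`∑ₖ C(n, k) (k + 2)!/2! (n - k + 2)!/2! = n! ∑ₖ C(k + 2, 2) C(n - k + 2, 2)` with `n = |ν|`, and the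
upper Chu–Vandermonde identity `∑ₖ C(k + 2, 2) C(n - k + 2, 2) = C(n + 5, 5)`, read off from
`(1 - X)⁻³ (1 - X)⁻³ = (1 - X)⁻⁶`, gives `(n + 5)!/5!`.
-/

open Finset Nat

open PowerSeries in
theorem Nat.sum_antidiagonal_add_choose_mul_add_choose (a b n : ℕ) :
    ∑ ij ∈ antidiagonal n, (a + ij.1).choose a * (b + ij.2).choose b
      = (a + b + 1 + n).choose (a + b + 1) := by
  have h := congrArg (fun F : ℤ⟦X⟧ˣ => coeff n F.val) (invOneSubPow_add ℤ (a + 1) (b + 1))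
  rw [show a + 1 + (b + 1) = a + b + 1 + 1 by ring] at h
  simp only [Units.val_mul, coeff_mul, invOneSubPow_val_succ_eq_mk_add_choose, coeff_mk] at h
  exact_mod_cast h.symm

theorem sum_range_choose_mul_add_factorial_div_factorial (K : Type*) [Field K] [CharZero K]
    (a b n : ℕ) :
    ∑ k ∈ range (n + 1), (n.choose k : K) * ((k + a)! / a ! * ((n - k + b)! / b !))
      = (n + a + b + 1)! / (a + b + 1)! := by
  have hterm : ∀ k ∈ range (n + 1), (n.choose k : K) * ((k + a)! / a ! * ((n - k + b)! / b !))
      = n ! * (((a + k).choose a * (b + (n - k)).choose b : ℕ) : K) := by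
    intro k hk
    rw [Nat.cast_choose K (Nat.lt_succ_iff.mp (mem_range.mp hk)), Nat.cast_mul,
      Nat.cast_add_choose, Nat.cast_add_choose, add_comm a, add_comm b]
    field_simp
  have hchoose : ∑ k ∈ range (n + 1), (a + k).choose a * (b + (n - k)).choose b
      = (a + b + 1 + n).choose (a + b + 1) := by
    rw [← Nat.sum_antidiagonal_eq_sum_range_succ fun i j => (a + i).choose a * (b + j).choose b]
    exact Nat.sum_antidiagonal_add_choose_mul_add_choose a b n
  rw [sum_congr rfl hterm, ← mul_sum, ← Nat.cast_sum, hchoose, Nat.cast_add_choose,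
    show n + a + b + 1 = a + b + 1 + n by ring]
  have : (n ! : K) ≠ 0 := Nat.cast_ne_zero.mpr (factorial_ne_zero n)
  field_simp

namespace Finsupp

variable {ι : Type*}

theorem sum_Iic_prod_eq_prod_sum_Iic {α R : Type*} [DecidableEq ι] [CommSemiring R]
    [AddCommMonoid α] [PartialOrder α] [CanonicallyOrderedAdd α] [OrderBot α]
    [LocallyFiniteOrder α] [DecidableEq α] (ν : ι →₀ α) (g : ι → α → R) :
    ∑ m ∈ Iic ν, ∏ j ∈ ν.support, g j (m j) = ∏ j ∈ ν.support, ∑ i ∈ Iic (ν j), g j i := by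
  classical
  rw [prod_sum, Iic_eq_Icc, Icc_eq, bot_eq_zero, support_zero, empty_union, Finset.finsupp,
    sum_map]
  refine Finset.sum_congr ?_ fun p _ => ?_
  · congr! 1; ext j : 1; rw [coe_rangeIcc, Finset.Iic_eq_Icc, bot_eq_zero]; rfl
  rw [← prod_attach]
  refine Finset.prod_congr rfl fun j _ => ?_
  simp [indicator_of_mem j.2]

theorem degree_eq_sum_support_of_le {M : Type*} [AddCommMonoid M] [PartialOrder M]
    [CanonicallyOrderedAdd M] {m ν : ι →₀ M} (h : m ≤ ν) :
    degree m = ∑ j ∈ ν.support, m j :=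
  Finset.sum_subset (support_mono h) fun _ _ hj => notMem_support_iff.mp hj

theorem degree_tsub_of_le {m ν : ι →₀ ℕ} (h : m ≤ ν) :
    degree (ν - m) = degree ν - degree m := by
  have := map_add degree (ν - m) m
  rw [tsub_add_cancel_of_le h] at this
  omega

variable {R : Type*} [DecidableEq ι] [CommSemiring R]

theorem sum_Iic_prod_choose_mul_pow_degree (ν : ι →₀ ℕ) (x : R) :
    ∑ m ∈ Iic ν, (∏ j ∈ ν.support, ((ν j).choose (m j) : R)) * x ^ degree m
      = (1 + x) ^ degree ν := by
  calc _ = ∑ m ∈ Iic ν, ∏ j ∈ ν.support, ((ν j).choose (m j) : R) * x ^ m j := by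
        refine Finset.sum_congr rfl fun m hm => ?_
        rw [prod_mul_distrib, prod_pow_eq_pow_sum, degree_eq_sum_support_of_le (mem_Iic.mp hm)]
    _ = ∏ j ∈ ν.support, (1 + x) ^ ν j := by
        rw [sum_Iic_prod_eq_prod_sum_Iic ν fun j i => ((ν j).choose i : R) * x ^ i]
        refine Finset.prod_congr rfl fun j _ => ?_
        rw [add_comm, add_pow, ← Nat.range_succ_eq_Iic]
        simp [mul_comm]
    _ = (1 + x) ^ degree ν := by rw [prod_pow_eq_pow_sum, degree_apply]

open Polynomial in
theorem sum_Iic_prod_choose_mul (ν : ι →₀ ℕ) (f : ℕ → R) :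
    ∑ m ∈ Iic ν, (∏ j ∈ ν.support, ((ν j).choose (m j) : R)) * f (degree m)
      = ∑ k ∈ range (degree ν + 1), ((degree ν).choose k : R) * f k := by
  -- `L` sends `X ^ k` to `f k`; apply it to the generating function at `x = X`.
  let L : R[X] →ₗ[R] R := Polynomial.lsum fun k => LinearMap.mulRight R (f k)
  have hL (c : R) (k : ℕ) : L (C c * X ^ k) = c * f k := by
    simp [L, C_mul_X_pow_eq_monomial, sum_monomial_index]
  have := congrArg L (sum_Iic_prod_choose_mul_pow_degree ν (X : R[X]))
  rw [add_comm, add_pow] at this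
  simpa only [map_sum, ← map_natCast C, ← map_prod, hL, one_pow, mul_one, mul_comm _ (C _)]
    using this

end Finsupp

open Finsupp in
/-- For any finitely supported multi-index `ν`,
`∑_{m ≤ ν} C(ν, m) · ((|m| + 2)!/2) · ((|ν − m| + 2)!/2) = (|ν| + 5)!/120`. -/
theorem sum_multiindex_factorial_five (ν : ℕ →₀ ℕ) :
    (∑ m ∈ Finset.Iic ν,
      ((∏ j ∈ ν.support, (ν j).choose (m j)) : ℚ) *
        ((Nat.factorial ((m.sum fun _ n => n) + 2) : ℚ) / 2) *
        ((Nat.factorial (((ν - m).sum fun _ n => n) + 2) : ℚ) / 2))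
    = (Nat.factorial ((ν.sum fun _ n => n) + 5) : ℚ) / 120 := by
  have hdeg (m : ℕ →₀ ℕ) : (m.sum fun _ n => n) = degree m := rfl
  simp only [hdeg]
  calc _ = ∑ m ∈ Iic ν, (∏ j ∈ ν.support, ((ν j).choose (m j) : ℚ)) *
        ((degree m + 2)! / 2 ! * ((degree ν - degree m + 2)! / 2 !)) := by
        refine sum_congr rfl fun m hm => ?_
        rw [degree_tsub_of_le (mem_Iic.mp hm)]
        norm_num [mul_assoc]
    _ = ∑ k ∈ range (degree ν + 1), ((degree ν).choose k : ℚ) *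
        ((k + 2)! / 2 ! * ((degree ν - k + 2)! / 2 !)) :=
        sum_Iic_prod_choose_mul ν fun k => ((k + 2)! / 2 ! * ((degree ν - k + 2)! / 2 !) : ℚ)
    _ = _ := by
        rw [sum_range_choose_mul_add_factorial_div_factorial]
        norm_num [factorial]
end

section
/- Define Λ̄_n := ∑_{i=0}^{n−1} C(n,i)(n−i) Λ_i for n ≥ 1 (and Λ̄_0 = 0), where Λ_0 = 1 and Λ_n = ∑_{i=0}^{n−1} C(n,i) Λ_i. Then for any real α with 0 < α ≤ ln 2 satisfying α·e^α ≤ 1 (in particular α = 1/2), we have Λ̄_n ≤ n! / α^n for all n ≥ 1. -/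
/-!
Inductively `Λ_i ≤ i!/α^i`, since `C(n,i) i!/α^i = (n!/α^n) α^(n-i)/(n-i)!` turns the recursion
into `Λ_n ≤ (n!/α^n) ∑_{k=1}^n α^k/k! ≤ (n!/α^n)(e^α - 1) ≤ n!/α^n`, using `e^α ≤ 2`.
The same substitution in `Λ̄_n` gives `(n!/α^n) ∑_{k=1}^n k α^k/k! ≤ (n!/α^n) α e^α ≤ n!/α^n`.
-/

open Finset
open scoped Nat

lemma choose_mul_factorial_div_pow {α : ℝ} (hα : α ≠ 0) {n i : ℕ} (hin : i ≤ n) :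
    (n.choose i : ℝ) * (i ! / α ^ i) = n ! / α ^ n * (α ^ (n - i) / (n - i)!) := by
  have hfact : (n.choose i : ℝ) * i ! * (n - i)! = n ! := by
    exact_mod_cast Nat.choose_mul_factorial_mul_factorial hin
  have hpow : α ^ (n - i) * α ^ i = α ^ n := pow_sub_mul_pow α hin
  field_simp
  linear_combination α ^ n * hfact - (n ! : ℝ) * hpow

lemma sum_choose_mul_le {Λ w : ℕ → ℝ} {α : ℝ} (hα : 0 < α) {n : ℕ} (hw : ∀ k, 0 ≤ w k)
    (hΛ : ∀ i < n, Λ i ≤ i ! / α ^ i) :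
    ∑ i ∈ range n, (n.choose i : ℝ) * w (n - i) * Λ i
      ≤ n ! / α ^ n * ∑ k ∈ range n, w (k + 1) * (α ^ (k + 1) / (k + 1)!) := by
  calc ∑ i ∈ range n, (n.choose i : ℝ) * w (n - i) * Λ i
      ≤ ∑ i ∈ range n, w (n - i) * ((n.choose i : ℝ) * (i ! / α ^ i)) := by
        refine sum_le_sum fun i hi => ?_
        have := hw (n - i)
        calc (n.choose i : ℝ) * w (n - i) * Λ i ≤ n.choose i * w (n - i) * (i ! / α ^ i) := by
              gcongr
              exact hΛ i (mem_range.mp hi)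
          _ = _ := by ring
    _ = n ! / α ^ n * ∑ i ∈ range n, w (n - i) * (α ^ (n - i) / (n - i)!) := by
        rw [mul_sum]
        refine sum_congr rfl fun i hi => ?_
        rw [choose_mul_factorial_div_pow hα.ne' (mem_range.mp hi).le]
        ring
    _ = n ! / α ^ n * ∑ k ∈ range n, w (k + 1) * (α ^ (k + 1) / (k + 1)!) := by
        rw [← sum_range_reflect]
        refine congrArg _ (sum_congr rfl fun k hk => ?_)
        rw [show n - (n - 1 - k) = k + 1 by have := mem_range.mp hk; omega]

lemma sum_range_pow_succ_div_factorial_le {x : ℝ} (hx : 0 ≤ x) (n : ℕ) :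
    ∑ k ∈ range n, x ^ (k + 1) / (k + 1)! ≤ Real.exp x - 1 := by
  have h := Real.sum_le_exp_of_nonneg hx (n + 1)
  rw [sum_range_succ'] at h
  simpa [le_sub_iff_add_le] using h

lemma succ_mul_pow_succ_div_factorial (x : ℝ) (k : ℕ) :
    ((k + 1 : ℕ) : ℝ) * (x ^ (k + 1) / (k + 1)!) = x * (x ^ k / k !) := by
  rw [Nat.factorial_succ]
  push_cast
  field_simp
  ring

lemma orderedBell_le_factorial_div_pow {Λ : ℕ → ℝ} (h0 : Λ 0 = 1)
    (hrec : ∀ n : ℕ, 1 ≤ n → Λ n = ∑ i ∈ range n, (n.choose i : ℝ) * Λ i)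
    {α : ℝ} (hα0 : 0 < α) (hα : α ≤ Real.log 2) (n : ℕ) :
    Λ n ≤ n ! / α ^ n := by
  induction n using Nat.strong_induction_on with
  | _ n ih =>
    rcases Nat.eq_zero_or_pos n with rfl | hn
    · simp [h0]
    have hexp : Real.exp α ≤ 2 := (Real.exp_le_exp.mpr hα).trans_eq (Real.exp_log two_pos)
    calc Λ n = ∑ i ∈ range n, (n.choose i : ℝ) * (fun _ => (1 : ℝ)) (n - i) * Λ i := by
          simp [hrec n hn]
      _ ≤ n ! / α ^ n * ∑ k ∈ range n, 1 * (α ^ (k + 1) / (k + 1)!) :=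
          sum_choose_mul_le hα0 (fun _ => zero_le_one) ih
      _ ≤ n ! / α ^ n * 1 := by
          gcongr
          simp only [one_mul]
          linarith [sum_range_pow_succ_div_factorial_le hα0.le n]
      _ = n ! / α ^ n := mul_one _

theorem orderedBellBar_le_factorial_div_pow_general
    (Λ : ℕ → ℝ) (h0 : Λ 0 = 1)
    (hrec : ∀ n : ℕ, 1 ≤ n → Λ n = ∑ i ∈ Finset.range n, (n.choose i : ℝ) * Λ i)
    (Λbar : ℕ → ℝ)
    (hbar : ∀ n : ℕ, 1 ≤ n →
      Λbar n = ∑ i ∈ Finset.range n, (n.choose i : ℝ) * ((n : ℝ) - i) * Λ i)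
    (α : ℝ) (hα0 : 0 < α) (hα : α ≤ Real.log 2) (hαe : α * Real.exp α ≤ 1) :
    ∀ n : ℕ, 1 ≤ n → Λbar n ≤ (Nat.factorial n : ℝ) / α ^ n := by
  intro n hn
  have hweights : Λbar n = ∑ i ∈ range n, (n.choose i : ℝ) * ((n - i : ℕ) : ℝ) * Λ i := by
    rw [hbar n hn]
    refine sum_congr rfl fun i hi => ?_
    rw [Nat.cast_sub (mem_range.mp hi).le]
  calc Λbar n
      ≤ n ! / α ^ n * ∑ k ∈ range n, ((k + 1 : ℕ) : ℝ) * (α ^ (k + 1) / (k + 1)!) :=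
        hweights ▸ sum_choose_mul_le (w := fun k => (k : ℝ)) hα0 (fun k => k.cast_nonneg)
          fun i _ => orderedBell_le_factorial_div_pow h0 hrec hα0 hα i
    _ = n ! / α ^ n * (α * ∑ k ∈ range n, α ^ k / k !) := by
        simp only [succ_mul_pow_succ_div_factorial, mul_sum]
    _ ≤ n ! / α ^ n * 1 := by
        gcongr
        calc α * ∑ k ∈ range n, α ^ k / k ! ≤ α * Real.exp α := by
              gcongr
              exact Real.sum_le_exp_of_nonneg hα0.le n
          _ ≤ 1 := hαe
    _ = n ! / α ^ n := mul_one _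

/-- With `Λ` the ordered Bell numbers and `Λ̄_n = ∑_{i=0}^{n−1} C(n,i)(n−i)Λ_i`,
for any real `α` with `0 < α ≤ ln 2` and `α·e^α ≤ 1` (in particular `α = 1/2`),
we have `Λ̄_n ≤ n!/α^n` for all `n ≥ 1`. -/
theorem orderedBellBar_le_factorial_div_pow
    (Λ : ℕ → ℝ) (h0 : Λ 0 = 1)
    (hrec : ∀ n : ℕ, 1 ≤ n → Λ n = ∑ i ∈ Finset.range n, (n.choose i : ℝ) * Λ i)
    (Λbar : ℕ → ℝ) (hbar0 : Λbar 0 = 0)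
    (hbar : ∀ n : ℕ, 1 ≤ n →
      Λbar n = ∑ i ∈ Finset.range n, (n.choose i : ℝ) * ((n : ℝ) - i) * Λ i)
    (α : ℝ) (hα0 : 0 < α) (hα : α ≤ Real.log 2) (hαe : α * Real.exp α ≤ 1) :
    ∀ n : ℕ, 1 ≤ n → Λbar n ≤ (Nat.factorial n : ℝ) / α ^ n :=
  orderedBellBar_le_factorial_div_pow_general Λ h0 hrec Λbar hbar α hα0 hα hαe
end
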